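/- arXiv:1201.1086 — 7 statements merged into one kernel-verified Lean document; each statement's English description precedes it below -/
import Mathlib

section
/- Let L be a complex Banach Lie algebra and let J be a closed linear subspace of L such that f(J) ⊆ J for every continuous Lie algebra automorphism f of L (i.e. every bijective continuous Lie algebra homomorphism of L whose inverse is continuous). Then δ(J) ⊆ J for every continuous Lie derivation δ of L; in particular ⁅a, x⁆ ∈ J for all a ∈ L and x ∈ J, so J is a closed Lie ideal of L. -/
/-!
A continuous bracket is a bounded bilinear map `B`, and for a continuous derivation `D` of `B`
the curve `t ↦ exp (-t • D) (B (exp (t • D) x) (exp (t • D) y))` has zero derivative, so every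
`exp (t • D)` is a continuous automorphism of `B` with continuous inverse `exp (-t • D)`.
A closed subspace `J` invariant under all these automorphisms contains the difference quotients
of `t ↦ exp (t • D) x` for `x ∈ J`, hence also their limit `D x`. Inner derivations `ad a` then
show that `J` is an ideal.
-/

open NormedSpace

section Bilinear

variable {𝕜 E F G : Type*} [RCLike 𝕜] [NormedAddCommGroup E] [NormedSpace 𝕜 E]
  [NormedAddCommGroup F] [NormedSpace 𝕜 F] [NormedAddCommGroup G] [NormedSpace 𝕜 G]

theorem LinearMap.exists_bound_of_continuous₂ (f : E →ₗ[𝕜] F →ₗ[𝕜] G)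
    (hf : Continuous fun p : E × F => f p.1 p.2) :
    ∃ C, ∀ x y, ‖f x y‖ ≤ C * ‖x‖ * ‖y‖ := by
  obtain ⟨ε, hε, hball⟩ := Metric.continuous_iff.mp hf 0 1 one_pos
  have hδ : 0 < ε / 2 := half_pos hε
  have hsphere : ∀ x y, ‖x‖ = ε / 2 → ‖y‖ = ε / 2 → ‖f x y‖ ≤ 1 := by
    intro x y hx hy
    have : dist (x, y) 0 < ε := by
      rw [Prod.dist_eq]
      simp only [Prod.fst_zero, Prod.snd_zero, dist_zero_right, hx, hy, max_self]
      linarith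
    simpa using (hball _ this).le
  refine ⟨(ε / 2 * (ε / 2))⁻¹, fun x y => ?_⟩
  rcases eq_or_ne x 0 with rfl | hx
  · simp
  rcases eq_or_ne y 0 with rfl | hy
  · simp
  set a : 𝕜 := (ε / 2 : ℝ) * (‖x‖ : 𝕜)⁻¹
  set b : 𝕜 := (ε / 2 : ℝ) * (‖y‖ : 𝕜)⁻¹
  have ha : ‖a‖ * ‖x‖ = ε / 2 := by rw [← norm_smul]; exact norm_smul_inv_norm' hδ.le hx
  have hb : ‖b‖ * ‖y‖ = ε / 2 := by rw [← norm_smul]; exact norm_smul_inv_norm' hδ.le hy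
  have key := hsphere (a • x) (b • y) (by rwa [norm_smul]) (by rwa [norm_smul])
  simp only [map_smul, LinearMap.smul_apply, norm_smul] at key
  rw [mul_assoc, inv_mul_eq_div, le_div_iff₀ (by positivity)]
  calc ‖f x y‖ * (ε / 2 * (ε / 2)) = ‖b‖ * (‖a‖ * ‖f x y‖) * (‖x‖ * ‖y‖) := by
        rw [show ε / 2 * (ε / 2) = ‖a‖ * ‖x‖ * (‖b‖ * ‖y‖) by rw [ha, hb]]; ring
    _ ≤ ‖x‖ * ‖y‖ := mul_le_of_le_one_left (by positivity) key

end Bilinear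

theorem exp_neg_mul_exp (𝕜 : Type*) {𝔸 : Type*} [RCLike 𝕜] [NormedRing 𝔸] [NormedAlgebra 𝕜 𝔸]
    [CompleteSpace 𝔸] (A : 𝔸) : exp (-A) * exp A = 1 := by
  have hball : ∀ B : 𝔸, B ∈ Metric.eball 0 (expSeries 𝕜 𝔸).radius :=
    fun B => (expSeries_radius_eq_top 𝕜 𝔸).symm ▸ edist_lt_top _ _
  rw [← exp_add_of_commute_of_mem_ball (Commute.refl A).neg_left (hball _) (hball _),
    neg_add_cancel, exp_zero]

theorem exp_mul_exp_neg (𝕜 : Type*) {𝔸 : Type*} [RCLike 𝕜] [NormedRing 𝔸] [NormedAlgebra 𝕜 𝔸]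
    [CompleteSpace 𝔸] (A : 𝔸) : exp A * exp (-A) = 1 := by
  simpa using exp_neg_mul_exp 𝕜 (-A)

section Derivation

variable {𝕜 E : Type*} [RCLike 𝕜] [NormedAddCommGroup E] [NormedSpace 𝕜 E] [CompleteSpace E]

noncomputable def ContinuousLinearEquiv.exp (A : E →L[𝕜] E) : E ≃L[𝕜] E :=
  .equivOfInverse (NormedSpace.exp A) (NormedSpace.exp (-A))
    (fun x => by rw [← mul_apply_eq_comp, exp_neg_mul_exp 𝕜]; rfl)
    (fun x => by rw [← mul_apply_eq_comp, exp_mul_exp_neg 𝕜]; rfl)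

theorem hasDerivAt_exp_smul_apply (A : E →L[𝕜] E) (x : E) (t : 𝕜) :
    HasDerivAt (fun s : 𝕜 => exp (s • A) x) (A (exp (t • A) x)) t := by
  simpa using (hasDerivAt_exp_smul_const' A t).clm_apply (hasDerivAt_const t x)

theorem exp_apply_bilinear_of_derivation (B : E →L[𝕜] E →L[𝕜] E) {D : E →L[𝕜] E}
    (hD : ∀ x y, D (B x y) = B x (D y) + B (D x) y) (x y : E) :
    exp D (B x y) = B (exp D x) (exp D y) := by
  set g : 𝕜 → E := fun s => exp (-(s • D)) (B (exp (s • D) x) (exp (s • D) y))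
  have hg : ∀ s, HasDerivAt g 0 s := by
    intro s
    have hneg : HasDerivAt (fun s : 𝕜 => exp (-(s • D))) (exp (-(s • D)) * -D) s := by
      simpa only [smul_neg] using hasDerivAt_exp_smul_const (𝕂 := 𝕜) (-D) s
    have hBxy := (B.hasFDerivAt.comp_hasDerivAt s (hasDerivAt_exp_smul_apply D x s)).clm_apply
      (hasDerivAt_exp_smul_apply D y s)
    refine (hneg.clm_apply hBxy).congr_deriv ?_
    rw [Function.comp_apply, mul_apply_eq_comp, neg_apply, hD]
    simp only [map_add, map_neg]
    abel
  have hg₁ : g 1 = g 0 :=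
    is_const_of_deriv_eq_zero (fun s => (hg s).differentiableAt) (fun s => (hg s).deriv) 1 0
  simp only [g, one_smul, zero_smul, neg_zero, exp_zero, one_apply_eq_self] at hg₁
  rw [← hg₁, ← mul_apply_eq_comp, exp_mul_exp_neg 𝕜, one_apply_eq_self]

variable {J : Submodule 𝕜 E}

theorem Submodule.apply_mem_of_forall_exp_smul_apply_mem (hJ : IsClosed (J : Set E))
    (D : E →L[𝕜] E) (hexp : ∀ t : 𝕜, ∀ x ∈ J, exp (t • D) x ∈ J) {x : E} (hx : x ∈ J) :
    D x ∈ J := by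
  have hD : HasDerivAt (fun t : 𝕜 => exp (t • D) x) (D x) 0 := by
    simpa using hasDerivAt_exp_smul_apply D x 0
  refine hJ.mem_of_tendsto (hasDerivAt_iff_tendsto_slope.mp hD) (.of_forall fun t => ?_)
  rw [slope_def_module]
  exact J.smul_mem _ (J.sub_mem (hexp t x hx) (by simpa using hx))

theorem Submodule.apply_mem_of_forall_bilinear_equiv_apply_mem (hJ : IsClosed (J : Set E))
    (B : E →L[𝕜] E →L[𝕜] E)
    (hJB : ∀ f : E ≃L[𝕜] E, (∀ x y, f (B x y) = B (f x) (f y)) → ∀ x ∈ J, f x ∈ J)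
    {D : E →L[𝕜] E} (hD : ∀ x y, D (B x y) = B x (D y) + B (D x) y) {x : E} (hx : x ∈ J) :
    D x ∈ J := by
  refine J.apply_mem_of_forall_exp_smul_apply_mem hJ D (fun t => hJB (.exp (t • D)) ?_) hx
  exact exp_apply_bilinear_of_derivation B fun x y => by simp [hD, smul_add]

end Derivation

/-- In a complex Banach Lie algebra, a closed subspace invariant under all continuous
Lie automorphisms is invariant under all continuous Lie derivations; in particular it is
a (closed) Lie ideal. -/
theorem stmt_0 {L : Type*} [LieRing L] [LieAlgebra ℂ L] [MetricSpace L] [CompleteSpace L]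
    (hdist : ∀ x y z : L, dist (x + z) (y + z) = dist x y)
    (hnorm : ∀ (c : ℂ) (x : L), dist (c • x) 0 = ‖c‖ * dist x 0)
    (hbracket : Continuous fun p : L × L => ⁅p.1, p.2⁆)
    (J : Submodule ℂ L) (hJcl : IsClosed (J : Set L))
    (hinv : ∀ f : L ≃ₗ⁅ℂ⁆ L, Continuous (f : L → L) → Continuous (f.symm : L → L) →
      ∀ x ∈ J, f x ∈ J) :
    (∀ δ : LieDerivation ℂ L L, Continuous (δ : L → L) → ∀ x ∈ J, δ x ∈ J) ∧
    (∀ a : L, ∀ x ∈ J, ⁅a, x⁆ ∈ J) := by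
  let : Norm L := ⟨fun x => dist x 0⟩
  let : NormedAddCommGroup L := .ofAddDist (fun _ => dist_comm _ _)
    (fun x y z => by rw [add_comm z x, add_comm z y, hdist])
  let : NormedSpace ℂ L := ⟨fun c x => (hnorm c x).le⟩
  let bracket : L →ₗ[ℂ] L →ₗ[ℂ] L := .mk₂ ℂ (⁅·, ·⁆) add_lie smul_lie lie_add lie_smul
  obtain ⟨C, hC⟩ := bracket.exists_bound_of_continuous₂ hbracket
  have hJaut : ∀ f : L ≃L[ℂ] L, (∀ x y, f ⁅x, y⁆ = ⁅f x, f y⁆) → ∀ x ∈ J, f x ∈ J :=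
    fun f hf => hinv { f.toLinearEquiv with map_lie' := hf _ _ } f.continuous f.symm.continuous
  have hderiv : ∀ δ : LieDerivation ℂ L L, Continuous (δ : L → L) → ∀ x ∈ J, δ x ∈ J :=
    fun δ hδ x hx => J.apply_mem_of_forall_bilinear_equiv_apply_mem hJcl
      (bracket.mkContinuous₂ C hC) hJaut (D := ⟨δ, hδ⟩) δ.apply_lie_eq_add hx
  refine ⟨hderiv, fun a x hx => ?_⟩
  have had : Continuous (LieDerivation.ad ℂ L a) := by
    convert hbracket.comp ((continuous_const (y := a)).prodMk continuous_id) using 1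
    ext
    simp
  simpa using hderiv _ had x hx
end

section
/- Let X be a complex Banach space and let G be a nonempty set of closed linear subspaces of X, each of finite codimension in X. Set p(G) = ⋂_{Y ∈ G} Y and let s(G) be the closure of the linear span of ⋃_{Y ∈ G} Y. If the quotient space s(G)/p(G) is separable and infinite-dimensional, then there exists a sequence (V_k)_{k ≥ 1} of subspaces belonging to G such that, setting Y_n = V_1 ∩ ⋯ ∩ V_n, one has Y_{n+1} ⊊ Y_n for every n ≥ 1 and ⋂_{n ≥ 1} Y_n = p(G). -/
open Metric Set

/-- Quotient by the intersection of two finite-codimensional submodules is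
finite-dimensional. -/
lemma aux_findim_inf {X : Type*} [AddCommGroup X] [Module ℂ X] (a b : Submodule ℂ X)
    (ha : FiniteDimensional ℂ (X ⧸ a)) (hb : FiniteDimensional ℂ (X ⧸ b)) :
    FiniteDimensional ℂ (X ⧸ (a ⊓ b)) := by
  have hker : LinearMap.ker ((a.mkQ).prod (b.mkQ)) = a ⊓ b := by
    rw [LinearMap.ker_prod, Submodule.ker_mkQ, Submodule.ker_mkQ]
  have h1 : FiniteDimensional ℂ (X ⧸ LinearMap.ker ((a.mkQ).prod (b.mkQ))) :=
    FiniteDimensional.of_injective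
      (LinearMap.quotKerEquivRange ((a.mkQ).prod (b.mkQ))).toLinearMap
      (LinearEquiv.injective _)
  rwa [hker] at h1

/-- Auxiliary recursive construction: `(auxV W n).1` is the `n`-th chosen member,
`(auxV W n).2` is the intersection of the first `n+1` chosen members.  At each step we
choose `W j` for the least `j` such that the current intersection is not contained in
`W j`. -/
noncomputable def auxV {α : Type*} [CompleteLattice α] (W : ℕ → α) : ℕ → α × α
  | 0 => (W 0, W 0)
  | n + 1 =>
    (W (sInf {j | ¬ (auxV W n).2 ≤ W j}),
      (auxV W n).2 ⊓ W (sInf {j | ¬ (auxV W n).2 ≤ W j}))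

lemma auxV_zero {α : Type*} [CompleteLattice α] (W : ℕ → α) : auxV W 0 = (W 0, W 0) := rfl

lemma auxV_succ_fst {α : Type*} [CompleteLattice α] (W : ℕ → α) (n : ℕ) :
    (auxV W (n + 1)).1 = W (sInf {j | ¬ (auxV W n).2 ≤ W j}) := rfl

lemma auxV_succ_snd {α : Type*} [CompleteLattice α] (W : ℕ → α) (n : ℕ) :
    (auxV W (n + 1)).2 = (auxV W n).2 ⊓ (auxV W (n + 1)).1 := rfl

lemma auxV_fst_mem_range {α : Type*} [CompleteLattice α] (W : ℕ → α) (n : ℕ) :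
    ∃ j, (auxV W n).1 = W j := by
  cases n with
  | zero => exact ⟨0, rfl⟩
  | succ n => exact ⟨_, auxV_succ_fst W n⟩

lemma auxV_snd_eq {α : Type*} [CompleteLattice α] (W : ℕ → α) (n : ℕ) :
    (auxV W n).2 = ⨅ k ∈ Finset.range (n + 1), (auxV W k).1 := by
  induction n with
  | zero => simp [auxV_zero]
  | succ n ih =>
      rw [auxV_succ_snd, ih, inf_comm]
      conv_rhs => rw [Finset.range_add_one, Finset.iInf_insert]

/-- If G is a nonempty family of closed finite-codimensional subspaces of a complex Banach
space X and the quotient s(G)/p(G) is separable and infinite-dimensional, then there is a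
sequence of members of G whose partial intersections strictly decrease to p(G). -/
theorem stmt_5 {X : Type*} [NormedAddCommGroup X] [NormedSpace ℂ X] [CompleteSpace X]
    (G : Set (Submodule ℂ X)) (hGne : G.Nonempty)
    (hG : ∀ Y ∈ G, IsClosed (Y : Set X) ∧ FiniteDimensional ℂ (X ⧸ Y))
    (hsep : TopologicalSpace.SeparableSpace
      (↥(sSup G).topologicalClosure ⧸ (sInf G).comap (sSup G).topologicalClosure.subtype))
    (hinf : ¬ FiniteDimensional ℂ
      (↥(sSup G).topologicalClosure ⧸ (sInf G).comap (sSup G).topologicalClosure.subtype)) :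
    ∃ V : ℕ → Submodule ℂ X, (∀ k, V k ∈ G) ∧
      StrictAnti (fun n : ℕ => ⨅ k ∈ Finset.range (n + 1), V k) ∧
      (⨅ n : ℕ, ⨅ k ∈ Finset.range (n + 1), V k) = sInf G := by
  classical
  haveI := hsep
  set S : Submodule ℂ X := (sSup G).topologicalClosure with hS
  set p : Submodule ℂ X := sInf G with hp
  set p' : Submodule ℂ S := p.comap S.subtype with hp'
  -- X ⧸ p is infinite-dimensional
  have hnotfin : ¬ FiniteDimensional ℂ (X ⧸ p) := by
    intro h
    apply hinf
    have hle : p' ≤ p.comap S.subtype := le_rfl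
    have hker : LinearMap.ker ((p.mkQ).comp S.subtype) ≤ p' := by
      rw [LinearMap.ker_comp, Submodule.ker_mkQ]
    have hinj : Function.Injective (p'.mapQ p S.subtype hle) := by
      rw [← LinearMap.ker_eq_bot, Submodule.mapQ, Submodule.ker_liftQ_eq_bot]
      exact hker
    exact FiniteDimensional.of_injective (p'.mapQ p S.subtype hle) hinj
  -- finite intersections of members of G have finite-dimensional quotients
  have hfin : ∀ (V : ℕ → Submodule ℂ X), (∀ k, V k ∈ G) → ∀ n : ℕ,
      FiniteDimensional ℂ (X ⧸ ⨅ k ∈ Finset.range (n + 1), V k) := by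
    intro V hV n
    induction n with
    | zero =>
        have h0 : (⨅ k ∈ Finset.range 1, V k) = V 0 := by simp
        rw [h0]; exact (hG _ (hV 0)).2
    | succ n ih =>
        rw [Finset.range_add_one, Finset.iInf_insert]
        exact aux_findim_inf _ _ ((hG _ (hV (n + 1))).2) ih
  -- so p is strictly below any finite intersection of members of G
  have hlt : ∀ (V : ℕ → Submodule ℂ X), (∀ k, V k ∈ G) → ∀ n : ℕ,
      p < ⨅ k ∈ Finset.range (n + 1), V k := by
    intro V hV n
    refine lt_of_le_of_ne (le_iInf fun k => le_iInf fun _ => sInf_le (hV k)) ?_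
    intro heq
    exact hnotfin (heq ▸ hfin V hV n)
  -- Step 1: find a countable subfamily with the same intersection.
  obtain ⟨Y₀, hY₀⟩ := hGne
  obtain ⟨D, hDc, hDd⟩ := TopologicalSpace.exists_countable_dense (↥S ⧸ p')
  set πim : Submodule ℂ X → Set (↥S ⧸ p') :=
    fun Y => (Submodule.Quotient.mk (p := p')) '' ((Y.comap S.subtype : Submodule ℂ S) : Set S)
    with hπim
  have hπim_ne : ∀ Y : Submodule ℂ X, (πim Y).Nonempty :=
    fun Y => ⟨Submodule.Quotient.mk 0, ⟨0, (Y.comap S.subtype).zero_mem, rfl⟩⟩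
  set sel : (↥S ⧸ p') × ℚ → Submodule ℂ X := fun e =>
    if h : ∃ Y ∈ G, (e.2 : ℝ) < infDist e.1 (πim Y) then h.choose else Y₀ with hsel
  have hselG : ∀ e, sel e ∈ G := by
    intro e
    by_cases h : ∃ Y ∈ G, (e.2 : ℝ) < infDist e.1 (πim Y)
    · rw [hsel]; simp only [dif_pos h]; exact h.choose_spec.1
    · rw [hsel]; simp only [dif_neg h]; exact hY₀
  have hsel_spec : ∀ e, (h : ∃ Y ∈ G, (e.2 : ℝ) < infDist e.1 (πim Y)) →
      (e.2 : ℝ) < infDist e.1 (πim (sel e)) := by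
    intro e h
    rw [hsel]; simp only [dif_pos h]; exact h.choose_spec.2
  set T : Set (Submodule ℂ X) := insert Y₀ (sel '' (D ×ˢ (Set.univ : Set ℚ))) with hT
  have hTc : T.Countable :=
    (Set.Countable.image (hDc.prod Set.countable_univ) sel).insert Y₀
  have hTG : ∀ Z ∈ T, Z ∈ G := by
    rintro Z (rfl | ⟨e, _, rfl⟩)
    · exact hY₀
    · exact hselG e
  obtain ⟨W, hWT⟩ := hTc.exists_eq_range ⟨Y₀, Set.mem_insert _ _⟩
  have hWG : ∀ n, W n ∈ G := fun n => hTG _ (hWT ▸ Set.mem_range_self n)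
  have hWmem : ∀ Z ∈ T, ∃ n, W n = Z := by
    intro Z hZ; rw [hWT] at hZ; exact hZ
  -- the countable subfamily has intersection p
  have hWp : (⨅ n, W n) = p := by
    refine le_antisymm ?_ (le_iInf fun n => sInf_le (hWG n))
    intro x hx
    have hxW : ∀ n, x ∈ W n := by
      simpa [Submodule.mem_iInf] using hx
    by_contra hxp
    obtain ⟨Y, hY, hxY⟩ : ∃ Y ∈ G, x ∉ Y := by
      by_contra hc
      push_neg at hc
      exact hxp (Submodule.mem_sInf.2 hc)
    -- x belongs to S
    have hxS : x ∈ S := by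
      obtain ⟨n, hn⟩ := hWmem Y₀ (Set.mem_insert _ _)
      have : x ∈ Y₀ := hn ▸ hxW n
      exact (le_sSup hY₀).trans (sSup G).le_topologicalClosure this
    set xs : S := ⟨x, hxS⟩ with hxs
    set ε : ℝ := infDist x (Y : Set X) with hε
    have hεpos : 0 < ε :=
      ((hG Y hY).1.notMem_iff_infDist_pos ⟨0, Y.zero_mem⟩).1 hxY
    -- distance from the class of x to the image of Y in the quotient is at least ε
    have key : ∀ Z : Submodule ℂ X, Z ∈ G → x ∉ Z →
        infDist x (Z : Set X) ≤ infDist (Submodule.Quotient.mk (p := p') xs) (πim Z) := by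
      intro Z hZ hxZ
      by_contra hcon
      push_neg at hcon
      obtain ⟨z, hzmem, hzd⟩ := (infDist_lt_iff (hπim_ne Z)).1 hcon
      obtain ⟨ys, hys, rfl⟩ := hzmem
      have hnorm : dist (Submodule.Quotient.mk (p := p') xs) (Submodule.Quotient.mk ys)
          = ‖(Submodule.Quotient.mk (p := p') (xs - ys) : ↥S ⧸ p')‖ := by
        rw [dist_eq_norm, ← Submodule.Quotient.mk_sub]
      have hnorm2 : ‖(Submodule.Quotient.mk (p := p') (xs - ys) : ↥S ⧸ p')‖
          = infDist (xs - ys) (p' : Set S) := QuotientAddGroup.norm_mk _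
      rw [hnorm, hnorm2] at hzd
      obtain ⟨w, hw, hwd⟩ := (infDist_lt_iff ⟨0, p'.zero_mem⟩).1 hzd
      have hmem : (ys : X) + (w : X) ∈ Z := Z.add_mem hys (sInf_le hZ hw)
      have : infDist x (Z : Set X) ≤ dist x ((ys : X) + (w : X)) :=
        infDist_le_dist_of_mem hmem
      have hxsx : (xs : X) = x := rfl
      have hdist : dist (xs - ys) w = dist x ((ys : X) + (w : X)) := by
        rw [Subtype.dist_eq]
        push_cast
        rw [dist_eq_norm, dist_eq_norm, sub_sub]
      rw [← hdist] at this
      linarith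
    have hkeyY := key Y hY hxY
    -- pick a close point of D and a rational threshold
    have hclos : (Submodule.Quotient.mk (p := p') xs) ∈ closure D := hDd _
    obtain ⟨d, hdD, hdd⟩ := Metric.mem_closure_iff.1 hclos (ε / 4) (by linarith)
    obtain ⟨q, hq1, hq2⟩ := exists_rat_btwn (show ε / 4 < ε / 2 by linarith)
    have hd1 : infDist (Submodule.Quotient.mk (p := p') xs) (πim Y)
        ≤ infDist d (πim Y) + dist (Submodule.Quotient.mk (p := p') xs) d :=
      infDist_le_infDist_add_dist
    have hdY : (q : ℝ) < infDist d (πim Y) := by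
      rw [← hε] at hkeyY
      linarith
    have hex : ∃ Y' ∈ G, (((d, q).2 : ℚ) : ℝ) < infDist (d, q).1 (πim Y') := ⟨Y, hY, hdY⟩
    have hZq := hsel_spec (d, q) hex
    set Z := sel (d, q) with hZ
    have hZT : Z ∈ T := Set.mem_insert_iff.2 (Or.inr ⟨(d, q), ⟨hdD, Set.mem_univ _⟩, rfl⟩)
    obtain ⟨n, hn⟩ := hWmem Z hZT
    have hxZ : x ∈ Z := hn ▸ hxW n
    -- but then the class of x lies in πim Z, contradiction
    have hmemπ : (Submodule.Quotient.mk (p := p') xs) ∈ πim Z :=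
      ⟨xs, hxZ, rfl⟩
    have h0 : infDist (Submodule.Quotient.mk (p := p') xs) (πim Z) = 0 :=
      infDist_zero_of_mem hmemπ
    have h2 : infDist d (πim Z) ≤ infDist (Submodule.Quotient.mk (p := p') xs) (πim Z)
        + dist d (Submodule.Quotient.mk (p := p') xs) := infDist_le_infDist_add_dist
    rw [h0, zero_add, dist_comm] at h2
    have : (q : ℝ) < ε / 4 := lt_of_lt_of_le hZq (h2.trans hdd.le)
    linarith
  -- Step 2: the recursive construction.
  set V : ℕ → Submodule ℂ X := fun n => (auxV W n).1 with hV
  set Yseq : ℕ → Submodule ℂ X := fun n => (auxV W n).2 with hYseq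
  have hVG : ∀ k, V k ∈ G := by
    intro k
    obtain ⟨j, hj⟩ := auxV_fst_mem_range W k
    show (auxV W k).1 ∈ G
    rw [hj]; exact hWG j
  have hYeq : ∀ n, Yseq n = ⨅ k ∈ Finset.range (n + 1), V k := fun n => auxV_snd_eq W n
  have hYlt : ∀ n, p < Yseq n := fun n => (hYeq n) ▸ hlt V hVG n
  have hstep : ∀ n, {j | ¬ Yseq n ≤ W j}.Nonempty := by
    intro n
    by_contra hc
    rw [Set.not_nonempty_iff_eq_empty] at hc
    have : Yseq n ≤ ⨅ j, W j := le_iInf fun j => by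
      by_contra h
      have hmem : j ∈ {j | ¬ Yseq n ≤ W j} := h
      rw [hc] at hmem
      exact hmem
    rw [hWp] at this
    exact absurd this (hYlt n).not_ge
  have hfind : ∀ n, ¬ Yseq n ≤ W (sInf {j | ¬ Yseq n ≤ W j}) :=
    fun n => Nat.sInf_mem (hstep n)
  have hstrict : ∀ n, Yseq (n + 1) < Yseq n := by
    intro n
    have h1 : Yseq (n + 1) = Yseq n ⊓ W (sInf {j | ¬ Yseq n ≤ W j}) := rfl
    rw [h1]
    exact lt_of_le_of_ne inf_le_left fun heq =>
      (hfind n) (le_of_eq_of_le heq.symm inf_le_right)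
  -- the chain property: Yseq n ≤ W j for j ≤ n
  have hchain : ∀ n, ∀ j ≤ n, Yseq n ≤ W j := by
    intro n
    induction n with
    | zero =>
        intro j hj
        interval_cases j
        exact le_of_eq rfl
    | succ n ih =>
        intro j hj
        set m := sInf {j | ¬ Yseq n ≤ W j} with hm
        have h1 : Yseq (n + 1) = Yseq n ⊓ W m := rfl
        have hle : Yseq (n + 1) ≤ Yseq n := h1.le.trans inf_le_left
        have hmn : n + 1 ≤ m := by
          by_contra hc
          push_neg at hc
          exact (hfind n) (ih m (Nat.lt_succ_iff.1 hc))
        rcases eq_or_lt_of_le hj with rfl | hjn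
        · rcases eq_or_lt_of_le hmn with hme | hml
          · rw [h1, ← hme]; exact inf_le_right
          · have hjm : ¬ (n + 1) ∈ {j | ¬ Yseq n ≤ W j} := Nat.notMem_of_lt_sInf hml
            have hWn : Yseq n ≤ W (n + 1) := not_not.1 hjm
            exact hle.trans hWn
        · exact hle.trans (ih j (Nat.lt_succ_iff.1 hjn))
  have hiInf : (⨅ n, Yseq n) = p := by
    refine le_antisymm ?_ (le_iInf fun n => (hYlt n).le)
    have : (⨅ n, Yseq n) ≤ ⨅ j, W j :=
      le_iInf fun j => (iInf_le _ j).trans (hchain j j le_rfl)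
    rwa [hWp] at this
  refine ⟨V, hVG, ?_, ?_⟩
  · have : (fun n : ℕ => ⨅ k ∈ Finset.range (n + 1), V k) = Yseq := by
      funext n; exact (hYeq n).symm
    rw [this]
    exact strictAnti_nat_of_succ_lt hstrict
  · have : (⨅ n : ℕ, ⨅ k ∈ Finset.range (n + 1), V k) = ⨅ n, Yseq n := by
      congr 1; funext n; exact (hYeq n).symm
    rw [this, hiInf]
end

section
/- Let L be a complex Banach Lie algebra and let a ∈ L. Then: (1) a belongs to every maximal proper closed Lie subalgebra of finite codimension in L if and only if, for every proper closed Lie subalgebra M of finite codimension in L, the smallest closed Lie subalgebra of L containing M and a is a proper subalgebra of L; (2) a belongs to every maximal proper closed Lie ideal of finite codimension in L if and only if, for every proper closed Lie ideal J of finite codimension in L, the smallest closed Lie ideal of L containing J and a is a proper ideal of L. -/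
/-!
If `M` is a proper subalgebra (or ideal) of finite codimension, the subalgebras containing `M`
embed strictly monotonically into the subspaces of the finite-dimensional space `L ⧸ M`, so `M`
lies in a maximal proper one `N`. When `M` is closed, so is `N`, since in a topological vector
space every subspace containing a closed subspace of finite codimension is closed. Hence if `a`
lies in every such maximal `N`, the closed subalgebra generated by `M` and `a` lies in `N` and is
proper. Conversely, if `M` is maximal and `a ∉ M`, the closed subalgebra generated by `M` and `a`
strictly contains `M`, so it is all of `L`.
-/

theorem Submodule.map_mkQ_strictMonoOn {R M : Type*} [Ring R] [AddCommGroup M] [Module R M]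
    (p : Submodule R M) : StrictMonoOn (fun q => q.map p.mkQ) (Set.Ici p) := by
  refine MonotoneOn.strictMonoOn_of_injOn (fun q₁ _ q₂ _ h => Submodule.map_mono h) ?_
  intro q₁ h₁ q₂ h₂ h
  simpa [Submodule.comap_map_mkQ, sup_of_le_right (Set.mem_Ici.1 h₁),
    sup_of_le_right (Set.mem_Ici.1 h₂)] using congrArg (Submodule.comap p.mkQ) h

theorem exists_le_isCoatom_of_strictMonoOn {α β : Type*} [PartialOrder α] [OrderTop α]
    [Preorder β] [WellFoundedGT β] {f : α → β} {a : α} (hf : StrictMonoOn f (Set.Ici a))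
    (ha : a ≠ ⊤) : ∃ b, a ≤ b ∧ IsCoatom b := by
  obtain ⟨b, ⟨hab, hb⟩, hmax⟩ := (wellFounded_gt.onFun (f := f)).has_min
    {b | a ≤ b ∧ b ≠ ⊤} ⟨a, le_rfl, ha⟩
  refine ⟨b, hab, hb, fun c hbc => by_contra fun hc => hmax c ⟨hab.trans hbc.le, hc⟩ ?_⟩
  exact hf hab (hab.trans hbc.le) hbc

theorem OrderEmbedding.exists_le_isCoatom_of_finiteDimensional_quotient {K L α : Type*}
    [DivisionRing K] [AddCommGroup L] [Module K L] [PartialOrder α] [OrderTop α]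
    (f : α ↪o Submodule K L) {M : α} (hM : M ≠ ⊤) [FiniteDimensional K (L ⧸ f M)] :
    ∃ N, M ≤ N ∧ IsCoatom N :=
  exists_le_isCoatom_of_strictMonoOn
    ((f M).map_mkQ_strictMonoOn.comp (f.strictMono.strictMonoOn _) fun _ h => f.monotone h) hM

/-- The norm `‖x‖ = dist x 0`, keeping the given metric and hence the given topology. -/
abbrev NormedAddCommGroup.ofDistAddRight {E : Type*} [AddCommGroup E] [MetricSpace E]
    (hdist : ∀ x y z : E, dist (x + z) (y + z) = dist x y) : NormedAddCommGroup E where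
  norm x := dist x 0
  dist_eq x y := by
    rw [dist_comm, ← hdist y x (-x), add_neg_cancel, neg_add_eq_sub, sub_eq_add_neg]

theorem IsTopologicalAddGroup.of_dist_add_right {E : Type*} [AddCommGroup E] [MetricSpace E]
    (hdist : ∀ x y z : E, dist (x + z) (y + z) = dist x y) : IsTopologicalAddGroup E :=
  let _ := NormedAddCommGroup.ofDistAddRight hdist
  inferInstance

theorem ContinuousSMul.of_dist_smul_zero {𝕜 E : Type*} [NormedField 𝕜] [AddCommGroup E]
    [Module 𝕜 E] [MetricSpace E] (hdist : ∀ x y z : E, dist (x + z) (y + z) = dist x y)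
    (hnorm : ∀ (c : 𝕜) (x : E), dist (c • x) 0 = ‖c‖ * dist x 0) : ContinuousSMul 𝕜 E :=
  let _ := NormedAddCommGroup.ofDistAddRight hdist
  let _ : NormedSpace 𝕜 E := ⟨fun c x => (hnorm c x).le⟩
  inferInstance

theorem OrderEmbedding.forall_isCoatom_mem_iff_sInf_ne_top {𝕜 L α : Type*}
    [NontriviallyNormedField 𝕜] [CompleteSpace 𝕜] [AddCommGroup L] [Module 𝕜 L]
    [TopologicalSpace L] [IsTopologicalAddGroup L] [ContinuousSMul 𝕜 L] [CompleteLattice α]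
    (f : α ↪o Submodule 𝕜 L)
    (hf : ∀ s : Set α, f (sInf s) = sInf (f '' s)) (a : L) :
    (∀ M : α, M ≠ ⊤ → IsClosed (f M : Set L) → FiniteDimensional 𝕜 (L ⧸ f M) →
        (∀ N, M < N → N = ⊤) → a ∈ f M) ↔
      (∀ M : α, M ≠ ⊤ → IsClosed (f M : Set L) → FiniteDimensional 𝕜 (L ⧸ f M) →
        sInf {N | IsClosed (f N : Set L) ∧ M ≤ N ∧ a ∈ f N} ≠ ⊤) := by
  constructor
  · intro h M hM hclosed hfin
    obtain ⟨N, hMN, hN⟩ := f.exists_le_isCoatom_of_finiteDimensional_quotient hM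
    have hMN' : f M ≤ f N := f.monotone hMN
    have hNclosed := Submodule.isClosed_mono_of_finiteDimensional_quotient hclosed hMN'
    have haN : a ∈ f N := h N hN.1 hNclosed (Submodule.CoFG.of_le hMN' hfin) hN.2
    exact ne_top_of_le_ne_top hN.1 (sInf_le ⟨hNclosed, hMN, haN⟩)
  · intro h M hM hclosed hfin hmax
    set T := sInf {N | IsClosed (f N : Set L) ∧ M ≤ N ∧ a ∈ f N}
    have haT : a ∈ f T := by
      rw [hf, Submodule.mem_sInf]
      rintro _ ⟨N, hN, rfl⟩
      exact hN.2.2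
    obtain hT | hT := (IsCoatom.le_iff ⟨hM, hmax⟩).1 (le_sInf fun N hN => hN.2.1 : M ≤ T)
    · exact absurd hT (h M hM hclosed hfin)
    · exact hT ▸ haT

theorem stmt_7_general {L : Type*} [LieRing L] [LieAlgebra ℂ L] [MetricSpace L]
    (hdist : ∀ x y z : L, dist (x + z) (y + z) = dist x y)
    (hnorm : ∀ (c : ℂ) (x : L), dist (c • x) 0 = ‖c‖ * dist x 0)
    (a : L) :
    ((∀ M : LieSubalgebra ℂ L, M ≠ ⊤ → IsClosed (M : Set L) →
        FiniteDimensional ℂ (L ⧸ M.toSubmodule) →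
        (∀ N : LieSubalgebra ℂ L, M < N → N = ⊤) → a ∈ M) ↔
      (∀ M : LieSubalgebra ℂ L, M ≠ ⊤ → IsClosed (M : Set L) →
        FiniteDimensional ℂ (L ⧸ M.toSubmodule) →
        sInf {N : LieSubalgebra ℂ L | IsClosed (N : Set L) ∧ M ≤ N ∧ a ∈ N} ≠ ⊤)) ∧
    ((∀ J : LieIdeal ℂ L, J ≠ ⊤ → IsClosed (J : Set L) →
        FiniteDimensional ℂ (L ⧸ (J : Submodule ℂ L)) →
        (∀ I : LieIdeal ℂ L, J < I → I = ⊤) → a ∈ J) ↔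
      (∀ J : LieIdeal ℂ L, J ≠ ⊤ → IsClosed (J : Set L) →
        FiniteDimensional ℂ (L ⧸ (J : Submodule ℂ L)) →
        sInf {I : LieIdeal ℂ L | IsClosed (I : Set L) ∧ J ≤ I ∧ a ∈ I} ≠ ⊤)) := by
  have := IsTopologicalAddGroup.of_dist_add_right hdist
  have := ContinuousSMul.of_dist_smul_zero hdist hnorm
  let toSubmodule : LieSubalgebra ℂ L ↪o Submodule ℂ L :=
    OrderEmbedding.ofMapLEIff _ LieSubalgebra.toSubmodule_le_toSubmodule
  exact ⟨toSubmodule.forall_isCoatom_mem_iff_sInf_ne_top (fun _ => rfl) a,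
    (LieSubmodule.toSubmodule_orderEmbedding ℂ L L).forall_isCoatom_mem_iff_sInf_ne_top
      (fun _ => rfl) a⟩

/-- Nongenerator characterizations: an element lies in every maximal proper closed Lie
subalgebra (resp. ideal) of finite codimension iff it is a nongenerator with respect to all
proper closed Lie subalgebras (resp. ideals) of finite codimension. -/
theorem stmt_7 {L : Type*} [LieRing L] [LieAlgebra ℂ L] [MetricSpace L] [CompleteSpace L]
    (hdist : ∀ x y z : L, dist (x + z) (y + z) = dist x y)
    (hnorm : ∀ (c : ℂ) (x : L), dist (c • x) 0 = ‖c‖ * dist x 0)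
    (hbracket : Continuous fun p : L × L => ⁅p.1, p.2⁆) (a : L) :
    ((∀ M : LieSubalgebra ℂ L, M ≠ ⊤ → IsClosed (M : Set L) →
        FiniteDimensional ℂ (L ⧸ M.toSubmodule) →
        (∀ N : LieSubalgebra ℂ L, M < N → N = ⊤) → a ∈ M) ↔
      (∀ M : LieSubalgebra ℂ L, M ≠ ⊤ → IsClosed (M : Set L) →
        FiniteDimensional ℂ (L ⧸ M.toSubmodule) →
        sInf {N : LieSubalgebra ℂ L | IsClosed (N : Set L) ∧ M ≤ N ∧ a ∈ N} ≠ ⊤)) ∧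
    ((∀ J : LieIdeal ℂ L, J ≠ ⊤ → IsClosed (J : Set L) →
        FiniteDimensional ℂ (L ⧸ (J : Submodule ℂ L)) →
        (∀ I : LieIdeal ℂ L, J < I → I = ⊤) → a ∈ J) ↔
      (∀ J : LieIdeal ℂ L, J ≠ ⊤ → IsClosed (J : Set L) →
        FiniteDimensional ℂ (L ⧸ (J : Submodule ℂ L)) →
        sInf {I : LieIdeal ℂ L | IsClosed (I : Set L) ∧ J ≤ I ∧ a ∈ I} ≠ ⊤)) :=
  stmt_7_general hdist hnorm a
end

section
/- Let L be a complex Banach Lie algebra, let J be a closed Lie ideal of L, and let I be a maximal proper closed Lie ideal of finite codimension in L. Then either J ⊆ I, or I ∩ J is a proper Lie ideal of J of finite codimension in J that is maximal among proper Lie ideals of J (and is closed). -/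
/-! Since `I` is maximal and `J ⊄ I`, we have `I + J = L`. For a subspace `K` with
`I ∩ J ≤ K ≤ J` and `[J, K] ⊆ K`, the subspace `I + K` is then an ideal of `L`, because
`[L, K] ⊆ [I, K] + [J, K] ⊆ I + K`. Maximality of `I` forces `I + K = I`, i.e. `K = I ∩ J`,
or `I + K = L`, i.e. `K = J` by the modular law. Finally `J / (I ∩ J)` embeds into `L / I`. -/

namespace Submodule

theorem finiteDimensional_quotient_comap_subtype_inf {K V : Type*} [DivisionRing K]
    [AddCommGroup V] [Module K V] (P N : Submodule K V) [FiniteDimensional K (V ⧸ P)] :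
    FiniteDimensional K (N ⧸ (P ⊓ N).comap N.subtype) := by
  let f : N →ₗ[K] V ⧸ P := P.mkQ ∘ₗ N.subtype
  have hker : (P ⊓ N).comap N.subtype = LinearMap.ker f := by
    rw [comap_inf, comap_subtype_self, inf_top_eq, LinearMap.ker_comp, ker_mkQ]
  exact ((quotEquivOfEq _ _ hker).trans f.quotKerEquivRange).symm.finiteDimensional

end Submodule

namespace LieIdeal

variable {R L : Type*} [CommRing R] [LieRing L] [LieAlgebra R L]

def supOfSupEqTop (I J : LieIdeal R L) (hIJ : I ⊔ J = ⊤) (K : Submodule R L)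
    (hK : ∀ x ∈ J, ∀ y ∈ K, ⁅x, y⁆ ∈ K) : LieIdeal R L where
  toSubmodule := (I : Submodule R L) ⊔ K
  lie_mem {x m} hm := by
    have hx : x ∈ (I : Submodule R L) ⊔ J := by
      simp only [toLieSubalgebra_toSubmodule, ← LieSubmodule.sup_toSubmodule, hIJ]
      trivial
    obtain ⟨i, hi, k, hk, rfl⟩ := Submodule.mem_sup.mp hm
    obtain ⟨a, ha, b, hb, rfl⟩ := Submodule.mem_sup.mp hx
    have hbracket : ⁅a + b, i + k⁆ = (⁅a + b, i⁆ - ⁅k, a⁆) + ⁅b, k⁆ := by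
      rw [← lie_skew k a]; simp only [lie_add, add_lie]; abel
    rw [hbracket]
    exact Submodule.add_mem_sup (sub_mem (I.lie_mem hi) (I.lie_mem ha)) (hK b hb k hk)

theorem eq_inf_of_maximal_of_sup_eq_top {I J : LieIdeal R L}
    (hImax : ∀ I' : LieIdeal R L, I < I' → I' = ⊤) (hIJ : I ⊔ J = ⊤) (K : Submodule R L)
    (hIK : ((I ⊓ J : LieIdeal R L) : Submodule R L) ≤ K) (hKJ : K ≤ J)
    (hK : ∀ x ∈ J, ∀ y ∈ K, ⁅x, y⁆ ∈ K) (hKne : K ≠ J) :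
    K = ((I ⊓ J : LieIdeal R L) : Submodule R L) := by
  simp only [toLieSubalgebra_toSubmodule, LieSubmodule.inf_toSubmodule] at *
  set M := supOfSupEqTop I J hIJ K hK
  have hIM : I ≤ M := fun x hx => Submodule.mem_sup_left hx
  rcases (hIM.lt_or_eq).imp (hImax M) id with hMtop | hMI
  · refine absurd ?_ hKne
    have hJ : J.toSubmodule ≤ I.toSubmodule ⊔ K := fun x _ =>
      show x ∈ M from hMtop ▸ LieSubmodule.mem_top x
    calc K = K ⊔ I.toSubmodule ⊓ J.toSubmodule := (sup_eq_left.mpr hIK).symm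
      _ = (K ⊔ I.toSubmodule) ⊓ J.toSubmodule := (sup_inf_assoc_of_le _ hKJ).symm
      _ = J.toSubmodule := by rw [sup_comm, inf_eq_right.mpr hJ]
  · have hKI : K ≤ I := fun x hx => hMI ▸ Submodule.mem_sup_right hx
    exact le_antisymm (le_inf hKI hKJ) hIK

end LieIdeal

theorem stmt_8_general {L : Type*} [LieRing L] [LieAlgebra ℂ L] [MetricSpace L]
    (J : LieIdeal ℂ L) (hJcl : IsClosed (J : Set L))
    (I : LieIdeal ℂ L) (hIcl : IsClosed (I : Set L))
    (hIcod : FiniteDimensional ℂ (L ⧸ (I : Submodule ℂ L)))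
    (hImax : ∀ I' : LieIdeal ℂ L, I < I' → I' = ⊤) :
    J ≤ I ∨
    (I ⊓ J < J ∧ IsClosed ((I ⊓ J : LieIdeal ℂ L) : Set L) ∧
      (∀ x ∈ J, ∀ y ∈ I ⊓ J, ⁅x, y⁆ ∈ I ⊓ J) ∧
      FiniteDimensional ℂ (↥(J : Submodule ℂ L) ⧸
        ((I ⊓ J : LieIdeal ℂ L) : Submodule ℂ L).comap (J : Submodule ℂ L).subtype) ∧
      (∀ K : Submodule ℂ L, ((I ⊓ J : LieIdeal ℂ L) : Submodule ℂ L) ≤ K →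
        K ≤ (J : Submodule ℂ L) → (∀ x ∈ J, ∀ y ∈ K, ⁅x, y⁆ ∈ K) →
        K ≠ (J : Submodule ℂ L) → K = ((I ⊓ J : LieIdeal ℂ L) : Submodule ℂ L))) := by
  by_cases hJI : J ≤ I
  · exact Or.inl hJI
  have hIJ : I ⊔ J = ⊤ := hImax _ (left_lt_sup.mpr hJI)
  exact Or.inr ⟨inf_lt_right.mpr hJI, LieSubmodule.coe_inf I J ▸ hIcl.inter hJcl,
    fun _ _ _ hy => (I ⊓ J).lie_mem hy,
    Submodule.finiteDimensional_quotient_comap_subtype_inf (I : Submodule ℂ L) J,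
    LieIdeal.eq_inf_of_maximal_of_sup_eq_top hImax hIJ⟩

/-- If J is a closed Lie ideal and I a maximal proper closed Lie ideal of finite
codimension in a complex Banach Lie algebra L, then either J ⊆ I or I ∩ J is a closed
maximal proper Lie ideal of J of finite codimension in J. -/
theorem stmt_8 {L : Type*} [LieRing L] [LieAlgebra ℂ L] [MetricSpace L] [CompleteSpace L]
    (hdist : ∀ x y z : L, dist (x + z) (y + z) = dist x y)
    (hnorm : ∀ (c : ℂ) (x : L), dist (c • x) 0 = ‖c‖ * dist x 0)
    (hbracket : Continuous fun p : L × L => ⁅p.1, p.2⁆)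
    (J : LieIdeal ℂ L) (hJcl : IsClosed (J : Set L))
    (I : LieIdeal ℂ L) (hIp : I ≠ ⊤) (hIcl : IsClosed (I : Set L))
    (hIcod : FiniteDimensional ℂ (L ⧸ (I : Submodule ℂ L)))
    (hImax : ∀ I' : LieIdeal ℂ L, I < I' → I' = ⊤) :
    J ≤ I ∨
    (I ⊓ J < J ∧ IsClosed ((I ⊓ J : LieIdeal ℂ L) : Set L) ∧
      (∀ x ∈ J, ∀ y ∈ I ⊓ J, ⁅x, y⁆ ∈ I ⊓ J) ∧
      FiniteDimensional ℂ (↥(J : Submodule ℂ L) ⧸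
        ((I ⊓ J : LieIdeal ℂ L) : Submodule ℂ L).comap (J : Submodule ℂ L).subtype) ∧
      (∀ K : Submodule ℂ L, ((I ⊓ J : LieIdeal ℂ L) : Submodule ℂ L) ≤ K →
        K ≤ (J : Submodule ℂ L) → (∀ x ∈ J, ∀ y ∈ K, ⁅x, y⁆ ∈ K) →
        K ≠ (J : Submodule ℂ L) → K = ((I ⊓ J : LieIdeal ℂ L) : Submodule ℂ L))) :=
  stmt_8_general J hJcl I hIcl hIcod hImax
end

section
/- Let L be a complex Banach Lie algebra such that the intersection of all maximal proper closed Lie subalgebras of finite codimension in L equals {0}. If L is solvable, then the second term of the derived series of L vanishes: ⁅⁅L,L⁆,⁅L,L⁆⁆ = {0}. -/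
/-!
Let `M` be a maximal subalgebra of finite codimension. Take the last term `A` of the derived
series not contained in `M`; then `⁅A, A⁆ ⊆ M`, so `M + A` is a subalgebra and maximality gives
`M + A = L`. Hence `A ∩ M` is an `L`-submodule of `A`, and `A ⧸ (A ∩ M)` embeds in `L ⧸ M`, so it is
finite-dimensional. Lie's theorem yields `a ∈ A \ M` and a weight `χ` with `⁅x, a⁆ ≡ χ x • a`
modulo `M`; `χ` vanishes on `⁅L, L⁆`, so `⁅z, a⁆ ∈ M` for `z ∈ ⁅L, L⁆`. By maximality again
`L = M + ℂ a`, and expanding brackets in this decomposition puts `⁅⁅L, L⁆, ⁅L, L⁆⁆` inside `M`.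
-/

open LieAlgebra LieModule

namespace LieAlgebra

variable {R L : Type*} [CommRing R] [LieRing L] [LieAlgebra R L]

theorem derivedSeries_succ_le_of_forall_lie_mem {n : ℕ} {p : Submodule R L}
    (h : ∀ x ∈ derivedSeries R L n, ∀ y ∈ derivedSeries R L n, ⁅x, y⁆ ∈ p) :
    (derivedSeries R L (n + 1)).toSubmodule ≤ p := by
  rw [derivedSeries_def, derivedSeriesOfIdeal_succ, LieSubmodule.lieIdeal_oper_eq_linear_span',
    Submodule.span_le]
  rintro _ ⟨x, hx, y, hy, rfl⟩
  exact h x hx y hy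

theorem exists_lieIdeal_not_le_of_isSolvable [IsSolvable L] {p : Submodule R L} (hp : p ≠ ⊤) :
    ∃ A : LieIdeal R L, ¬A.toSubmodule ≤ p ∧ ∀ x ∈ A, ∀ y ∈ A, ⁅x, y⁆ ∈ p := by
  classical
  obtain ⟨n, hn⟩ := IsSolvable.solvable R L
  have hex : ∃ n, (derivedSeries R L n).toSubmodule ≤ p := ⟨n, by simp [hn]⟩
  obtain ⟨j, hj⟩ : ∃ j, Nat.find hex = j + 1 := by
    refine Nat.exists_eq_succ_of_ne_zero fun h0 => hp (eq_top_iff.mpr ?_)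
    simpa [h0] using Nat.find_spec hex
  refine ⟨derivedSeries R L j, Nat.find_min hex (by omega), fun x hx y hy => ?_⟩
  refine (hj ▸ Nat.find_spec hex) ?_
  rw [derivedSeries_def, derivedSeriesOfIdeal_succ]
  exact LieSubmodule.lie_mem_lie hx hy

end LieAlgebra

namespace LieModule

variable {k L V : Type*} [Field k] [LieRing L] [LieAlgebra k L]
  [AddCommGroup V] [Module k V] [LieRingModule L V] [LieModule k L V]

theorem apply_eq_zero_of_mem_derivedSeries_one {χ : Module.Dual k L} {v : V}
    (hv : v ∈ weightSpace V χ) (hv0 : v ≠ 0) {z : L} (hz : z ∈ derivedSeries k L 1) :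
    χ z = 0 := by
  rw [mem_weightSpace] at hv
  have hlie : ∀ x y : L, χ ⁅x, y⁆ = 0 := fun x y => by
    have h : χ ⁅x, y⁆ • v = 0 := by
      rw [← hv, lie_lie, hv, hv, lie_smul, lie_smul, hv, hv, smul_comm, sub_self]
    exact (smul_eq_zero.mp h).resolve_right hv0
  exact derivedSeries_succ_le_of_forall_lie_mem (p := LinearMap.ker χ)
    (fun x _ y _ => hlie x y) hz

end LieModule

namespace LieSubalgebra

section CommRing

variable {R L : Type*} [CommRing R] [LieRing L] [LieAlgebra R L]

theorem toSubmodule_sup_eq_top_of_isCoatom {M : LieSubalgebra R L} (hM : IsCoatom M)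
    {W : Submodule R L} (hW : ¬W ≤ M.toSubmodule)
    (hMW : ∀ m ∈ M, ∀ w ∈ W, ⁅m, w⁆ ∈ M.toSubmodule ⊔ W)
    (hWW : ∀ v ∈ W, ∀ w ∈ W, ⁅v, w⁆ ∈ M.toSubmodule ⊔ W) :
    M.toSubmodule ⊔ W = ⊤ := by
  let N : LieSubalgebra R L :=
    { toSubmodule := M.toSubmodule ⊔ W
      lie_mem' := by
        intro x y hx hy
        obtain ⟨m, hm, v, hv, rfl⟩ := Submodule.mem_sup.mp hx
        obtain ⟨m', hm', w, hw, rfl⟩ := Submodule.mem_sup.mp hy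
        have hvm' : ⁅v, m'⁆ ∈ M.toSubmodule ⊔ W := by
          rw [← lie_skew]
          exact neg_mem (hMW m' hm' v hv)
        rw [lie_add, add_lie, add_lie]
        exact add_mem (add_mem (Submodule.mem_sup_left (M.lie_mem hm hm')) hvm')
          (add_mem (hMW m hm w hw) (hWW v hv w hw)) }
  have hMN : M < N := lt_of_le_not_ge (fun _ => Submodule.mem_sup_left) fun h =>
    hW (le_sup_right.trans (h : N.toSubmodule ≤ M.toSubmodule))
  have hNtop := congrArg toSubmodule (hM.2 N hMN)
  rwa [top_toSubmodule] at hNtop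

theorem toSubmodule_sup_span_singleton_eq_top_of_isCoatom {M : LieSubalgebra R L}
    (hM : IsCoatom M) {a : L} (haM : a ∉ M)
    (ha : ∀ m ∈ M, ⁅m, a⁆ ∈ M.toSubmodule ⊔ R ∙ a) :
    M.toSubmodule ⊔ R ∙ a = ⊤ := by
  refine toSubmodule_sup_eq_top_of_isCoatom hM (by simpa using haM) ?_ ?_
  · intro m hm w hw
    obtain ⟨c, rfl⟩ := Submodule.mem_span_singleton.mp hw
    rw [lie_smul]
    exact Submodule.smul_mem _ c (ha m hm)
  · intro v hv w hw
    obtain ⟨c, rfl⟩ := Submodule.mem_span_singleton.mp hv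
    obtain ⟨c', rfl⟩ := Submodule.mem_span_singleton.mp hw
    simp

theorem lie_mem_of_sup_span_singleton_eq_top {M : LieSubalgebra R L} {a : L}
    (h : M.toSubmodule ⊔ R ∙ a = ⊤) {z w : L} (hz : ⁅z, a⁆ ∈ M) (hw : ⁅w, a⁆ ∈ M) :
    ⁅z, w⁆ ∈ M := by
  obtain ⟨m, hm, _, hc, rfl⟩ := Submodule.mem_sup.mp (h ▸ Submodule.mem_top : z ∈ _)
  obtain ⟨m', hm', _, hc', rfl⟩ := Submodule.mem_sup.mp (h ▸ Submodule.mem_top : w ∈ _)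
  obtain ⟨c, rfl⟩ := Submodule.mem_span_singleton.mp hc
  obtain ⟨c', rfl⟩ := Submodule.mem_span_singleton.mp hc'
  simp only [add_lie, smul_lie, lie_self, smul_zero, add_zero] at hz hw
  have : ⁅m + c • a, m' + c' • a⁆ = ⁅m, m'⁆ + c' • ⁅m, a⁆ - c • ⁅m', a⁆ := by
    rw [← lie_skew m' a]
    simp only [lie_add, add_lie, lie_smul, smul_lie, lie_self, smul_zero, add_zero, smul_neg]
    abel
  rw [this]
  exact sub_mem (add_mem (M.lie_mem hm hm') (M.smul_mem c' hz)) (M.smul_mem c hw)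

def comapLieIdeal (M : LieSubalgebra R L) (A : LieIdeal R L)
    (hsup : M.toSubmodule ⊔ A.toSubmodule = ⊤) (hAA : ∀ x ∈ A, ∀ y ∈ A, ⁅x, y⁆ ∈ M) :
    LieSubmodule R L A where
  toSubmodule := M.toSubmodule.comap A.toSubmodule.subtype
  lie_mem := by
    intro x b hb
    obtain ⟨m, hm, d, hd, rfl⟩ := Submodule.mem_sup.mp (hsup ▸ Submodule.mem_top : x ∈ _)
    change ⁅m + d, (b : L)⁆ ∈ M
    rw [add_lie]
    exact add_mem (M.lie_mem hm hb) (hAA d hd b b.2)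

end CommRing

variable {k L : Type*} [Field k] [LieRing L] [LieAlgebra k L]

theorem exists_lie_sub_smul_mem [CharZero k] [IsAlgClosed k] [IsSolvable L]
    {M : LieSubalgebra k L} [FiniteDimensional k (L ⧸ M.toSubmodule)] {A : LieIdeal k L}
    (hAM : ¬A.toSubmodule ≤ M.toSubmodule) (hsup : M.toSubmodule ⊔ A.toSubmodule = ⊤)
    (hAA : ∀ x ∈ A, ∀ y ∈ A, ⁅x, y⁆ ∈ M) :
    ∃ (a : L) (χ : Module.Dual k L), a ∉ M ∧ (∀ x, ⁅x, a⁆ - χ x • a ∈ M) ∧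
      ∀ z ∈ derivedSeries k L 1, χ z = 0 := by
  set N := M.comapLieIdeal A hsup hAA
  have : FiniteDimensional k (A ⧸ N) := by
    refine Module.Finite.of_injective (N.toSubmodule.mapQ M.toSubmodule
      A.toSubmodule.subtype fun _ hb => hb) ?_
    refine (injective_iff_map_eq_zero _).mpr fun q hq => ?_
    obtain ⟨b, rfl⟩ := Submodule.Quotient.mk_surjective _ q
    exact (Submodule.Quotient.mk_eq_zero _).mpr
      ((Submodule.Quotient.mk_eq_zero M.toSubmodule).mp hq)
  have : Nontrivial (A ⧸ N) := by
    obtain ⟨a, haA, haM⟩ := Set.not_subset.mp hAM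
    exact nontrivial_of_ne (LieSubmodule.Quotient.mk (N := N) ⟨a, haA⟩) 0
      fun h => haM ((LieSubmodule.Quotient.mk_eq_zero' (N := N)).mp h)
  obtain ⟨χ, hχ⟩ := exists_nontrivial_weightSpace_of_isSolvable k L (A ⧸ N)
  obtain ⟨⟨v, hv⟩, hv0⟩ := exists_ne (0 : weightSpace (A ⧸ N) χ)
  obtain ⟨a, rfl⟩ := LieSubmodule.Quotient.surjective_mk' N v
  have hv0' : LieSubmodule.Quotient.mk' N a ≠ 0 := fun h => hv0 (Subtype.ext h)
  refine ⟨a, χ, fun haM => hv0' ((LieSubmodule.Quotient.mk_eq_zero N).mpr haM), fun x => ?_,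
    fun z hz => apply_eq_zero_of_mem_derivedSeries_one hv hv0' hz⟩
  have hx := (mem_weightSpace _ _).mp hv x
  rw [← LieModuleHom.map_lie, ← map_smul, ← sub_eq_zero, ← map_sub,
    LieSubmodule.Quotient.mk_eq_zero] at hx
  exact hx

theorem derivedSeries_two_le_of_isCoatom [CharZero k] [IsAlgClosed k] [IsSolvable L]
    {M : LieSubalgebra k L} (hM : IsCoatom M) [FiniteDimensional k (L ⧸ M.toSubmodule)] :
    (derivedSeries k L 2).toSubmodule ≤ M.toSubmodule := by
  obtain ⟨A, hAM, hAA⟩ := exists_lieIdeal_not_le_of_isSolvable (p := M.toSubmodule)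
    (by simpa using hM.1)
  have hsup : M.toSubmodule ⊔ A.toSubmodule = ⊤ :=
    toSubmodule_sup_eq_top_of_isCoatom hM hAM (fun _ _ _ hw => Submodule.mem_sup_right
      (A.lie_mem hw)) fun _ _ _ hw => Submodule.mem_sup_right (A.lie_mem hw)
  obtain ⟨a, χ, haM, ha, hχ⟩ := exists_lie_sub_smul_mem hAM hsup hAA
  have hsupa : M.toSubmodule ⊔ k ∙ a = ⊤ := by
    refine toSubmodule_sup_span_singleton_eq_top_of_isCoatom hM haM fun m _ => ?_
    rw [← sub_add_cancel ⁅m, a⁆ (χ m • a)]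
    exact add_mem (Submodule.mem_sup_left (ha m))
      (Submodule.mem_sup_right (Submodule.smul_mem _ _ (Submodule.mem_span_singleton_self a)))
  have hderiv : ∀ z ∈ derivedSeries k L 1, ⁅z, a⁆ ∈ M := fun z hz => by
    simpa [hχ z hz] using ha z
  exact derivedSeries_succ_le_of_forall_lie_mem fun z hz w hw =>
    lie_mem_of_sup_span_singleton_eq_top hsupa (hderiv z hz) (hderiv w hw)

end LieSubalgebra

theorem stmt_13_general {L : Type*} [LieRing L] [LieAlgebra ℂ L] [MetricSpace L]
    (hfree : sInf {M : LieSubalgebra ℂ L | M ≠ ⊤ ∧ IsClosed (M : Set L) ∧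
      FiniteDimensional ℂ (L ⧸ M.toSubmodule) ∧
      ∀ N : LieSubalgebra ℂ L, M < N → N = ⊤} = ⊥)
    (hsolv : LieAlgebra.IsSolvable L) :
    LieAlgebra.derivedSeries ℂ L 2 = ⊥ := by
  refine (LieSubmodule.eq_bot_iff _).mpr fun x hx => (LieSubalgebra.mem_bot (R := ℂ) x).mp ?_
  rw [← hfree, ← SetLike.mem_coe, LieSubalgebra.coe_sInf, Set.mem_iInter₂]
  rintro M ⟨hMtop, -, hfin, hmax⟩
  exact LieSubalgebra.derivedSeries_two_le_of_isCoatom ⟨hMtop, hmax⟩ hx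

/-- A solvable complex Banach Lie algebra in which the maximal proper closed Lie
subalgebras of finite codimension intersect to {0} satisfies ⁅⁅L,L⁆,⁅L,L⁆⁆ = {0}. -/
theorem stmt_13 {L : Type*} [LieRing L] [LieAlgebra ℂ L] [MetricSpace L] [CompleteSpace L]
    (hdist : ∀ x y z : L, dist (x + z) (y + z) = dist x y)
    (hnorm : ∀ (c : ℂ) (x : L), dist (c • x) 0 = ‖c‖ * dist x 0)
    (hbracket : Continuous fun p : L × L => ⁅p.1, p.2⁆)
    (hfree : sInf {M : LieSubalgebra ℂ L | M ≠ ⊤ ∧ IsClosed (M : Set L) ∧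
      FiniteDimensional ℂ (L ⧸ M.toSubmodule) ∧
      ∀ N : LieSubalgebra ℂ L, M < N → N = ⊤} = ⊥)
    (hsolv : LieAlgebra.IsSolvable L) :
    LieAlgebra.derivedSeries ℂ L 2 = ⊥ :=
  stmt_13_general hfree hsolv
end

section
/- Let L be a complex Banach Lie algebra such that the intersection of all maximal proper closed Lie subalgebras of finite codimension in L equals {0}. Then L is nilpotent if and only if L is abelian, i.e. ⁅L,L⁆ = {0}. -/
/-!
In a nilpotent Lie algebra every maximal subalgebra `M` contains `⁅L, L⁆`. Descend the lower
central series `Cⁿ`: once `Cⁿ⁺¹ ⊆ M`, the sum `M + Cⁿ` is a subalgebra whose brackets all lie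
in `M`, so by maximality either `M + Cⁿ = M`, and we descend one more step, or `M + Cⁿ = L`,
and then `⁅L, L⁆ ⊆ M`. The descent cannot reach `C⁰ = L ⊆ M`. Hence `⁅L, L⁆` lies in the
intersection of the maximal subalgebras, which is `{0}`.
-/
namespace LieSubalgebra

variable {R L : Type*} [CommRing R] [LieRing L] [LieAlgebra R L]

open LieModule

theorem lie_mem_of_mem_sup {M : LieSubalgebra R L} {V : Submodule R L}
    (hV : ∀ (x : L), ∀ v ∈ V, ⁅x, v⁆ ∈ M) {x y : L}
    (hx : x ∈ M.toSubmodule ⊔ V) (hy : y ∈ M.toSubmodule ⊔ V) : ⁅x, y⁆ ∈ M := by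
  obtain ⟨a, ha, b, hb, rfl⟩ := Submodule.mem_sup.mp hx
  obtain ⟨c, hc, d, hd, rfl⟩ := Submodule.mem_sup.mp hy
  have hbc : ⁅b, c⁆ ∈ M := by rw [← lie_skew]; exact M.neg_mem (hV c b hb)
  simp only [add_lie, lie_add]
  exact M.add_mem (M.add_mem (M.lie_mem ha hc) hbc) (M.add_mem (hV a d hd) (hV b d hd))

def supOfLieMem (M : LieSubalgebra R L) (V : Submodule R L)
    (hV : ∀ (x : L), ∀ v ∈ V, ⁅x, v⁆ ∈ M) : LieSubalgebra R L :=
  { M.toSubmodule ⊔ V with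
    lie_mem' := fun hx hy => Submodule.mem_sup_left (lie_mem_of_mem_sup hV hx hy) }

theorem lie_mem_of_isCoatom_of_lowerCentralSeries_le {M : LieSubalgebra R L} (hM : IsCoatom M)
    (n : ℕ) (hn : (lowerCentralSeries R L L n : Submodule R L) ≤ M.toSubmodule) (x y : L) :
    ⁅x, y⁆ ∈ M := by
  induction n with
  | zero =>
    refine absurd (eq_top_iff.mpr fun z _ => hn ?_) hM.1
    simp
  | succ n ih =>
    have hV : ∀ (x : L), ∀ v ∈ lowerCentralSeries R L L n, ⁅x, v⁆ ∈ M := fun x v hv =>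
      hn <| by
        rw [lowerCentralSeries_succ]
        exact LieSubmodule.lie_mem_lie (LieSubmodule.mem_top x) hv
    set N := M.supOfLieMem _ hV
    have hMN : M ≤ N := fun z hz => Submodule.mem_sup_left hz
    rcases hMN.lt_or_eq with hlt | heq
    · have hN : ∀ z : L, z ∈ N := fun z => hM.2 N hlt ▸ mem_top z
      exact lie_mem_of_mem_sup hV (hN x) (hN y)
    · exact ih (fun v hv => heq ▸ Submodule.mem_sup_right hv)

theorem lie_mem_of_isCoatom [LieRing.IsNilpotent L] {M : LieSubalgebra R L} (hM : IsCoatom M)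
    (x y : L) : ⁅x, y⁆ ∈ M := by
  obtain ⟨k, hk⟩ := IsNilpotent.nilpotent R L L
  exact lie_mem_of_isCoatom_of_lowerCentralSeries_le hM k (by simp [hk]) x y

theorem isLieAbelian_of_sInf_eq_bot [LieRing.IsNilpotent L] {S : Set (LieSubalgebra R L)}
    (hS : ∀ M ∈ S, IsCoatom M) (h : sInf S = ⊥) : IsLieAbelian L := by
  refine ⟨fun x y => ?_⟩
  have hxy : ⁅x, y⁆ ∈ sInf S := by
    rw [← SetLike.mem_coe, coe_sInf, Set.mem_iInter₂]
    exact fun M hM => lie_mem_of_isCoatom (hS M hM) x y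
  simpa [h] using hxy

end LieSubalgebra

theorem stmt_14_general {L : Type*} [LieRing L] [LieAlgebra ℂ L] [MetricSpace L]
    (hfree : sInf {M : LieSubalgebra ℂ L | M ≠ ⊤ ∧ IsClosed (M : Set L) ∧
      FiniteDimensional ℂ (L ⧸ M.toSubmodule) ∧
      ∀ N : LieSubalgebra ℂ L, M < N → N = ⊤} = ⊥) :
    LieRing.IsNilpotent L ↔ IsLieAbelian L :=
  ⟨fun _ => LieSubalgebra.isLieAbelian_of_sInf_eq_bot (fun _ hM => ⟨hM.1, hM.2.2.2⟩) hfree,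
    fun _ => inferInstance⟩

/-- A complex Banach Lie algebra in which the maximal proper closed Lie subalgebras of
finite codimension intersect to {0} is nilpotent iff it is abelian. -/
theorem stmt_14 {L : Type*} [LieRing L] [LieAlgebra ℂ L] [MetricSpace L] [CompleteSpace L]
    (hdist : ∀ x y z : L, dist (x + z) (y + z) = dist x y)
    (hnorm : ∀ (c : ℂ) (x : L), dist (c • x) 0 = ‖c‖ * dist x 0)
    (hbracket : Continuous fun p : L × L => ⁅p.1, p.2⁆)
    (hfree : sInf {M : LieSubalgebra ℂ L | M ≠ ⊤ ∧ IsClosed (M : Set L) ∧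
      FiniteDimensional ℂ (L ⧸ M.toSubmodule) ∧
      ∀ N : LieSubalgebra ℂ L, M < N → N = ⊤} = ⊥) :
    LieRing.IsNilpotent L ↔ IsLieAbelian L :=
  stmt_14_general hfree
end

section
/- Let L be a subsimple finite-dimensional complex Lie algebra, i.e. either dim L = 1 or L has a maximal proper Lie subalgebra that contains no nonzero Lie ideal of L. Then the intersection of all maximal proper Lie subalgebras of L equals {0}; moreover, if dim L ≥ 2, then the centre of L equals {0}. -/
/-!
The Frattini subalgebra `Φ(L)`, the intersection of the maximal subalgebras, is carried to itself
by every automorphism of `L`, since automorphisms permute the maximal subalgebras. Over `ℂ` the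
automorphisms `exp (t • ad x)` are defined for every `x`, and differentiating `t ↦ exp (t • ad x) y`
at `t = 0` shows `⁅x, y⁆ ∈ Φ(L)` for `y ∈ Φ(L)`: `Φ(L)` is an ideal. It lies in every maximal
subalgebra, in particular in one containing no nonzero ideal, so it vanishes.

For the centre, let `M` be such a maximal subalgebra. If the centre lies in `M` it is zero.
Otherwise a central `z ∉ M` normalises `M`, so the normaliser of `M` is `L` and `M` is an ideal, hence
`M = 0`; then `⊥` is maximal, which forces `dim L = 1`. When `dim L = 1`, `⊥` is itself a maximal
subalgebra containing no nonzero ideal, so both cases of subsimplicity are handled uniformly.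
-/

open NormedSpace

section Exponential

variable {𝕂 V : Type*} [RCLike 𝕂] [NormedAddCommGroup V] [NormedSpace 𝕂 V] [CompleteSpace V]

theorem exp_apply_exp_neg_apply (D : V →L[𝕂] V) (v : V) : exp D (exp (-D) v) = v := by
  let := NormedAlgebra.restrictScalars ℚ 𝕂 (V →L[𝕂] V)
  rw [← mul_apply_eq_comp, ← exp_add_of_commute (Commute.refl D).neg_right,
    add_neg_cancel, exp_zero, one_apply_eq_self]

theorem exp_neg_apply_exp_apply (D : V →L[𝕂] V) (v : V) : exp (-D) (exp D v) = v := by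
  simpa using exp_apply_exp_neg_apply (-D) v

theorem exp_smul_apply_of_leibniz (B : V →L[𝕂] V →L[𝕂] V) (D : V →L[𝕂] V)
    (hD : ∀ a b, D (B a b) = B (D a) b + B a (D b)) (t : 𝕂) (a b : V) :
    exp (t • D) (B a b) = B (exp (t • D) a) (exp (t • D) b) := by
  let f : 𝕂 → V := fun s => exp (-(s • D)) (B (exp (s • D) a) (exp (s • D) b))
  have hf : ∀ s, HasDerivAt f 0 s := by
    intro s
    have hexp : ∀ v : V, HasDerivAt (fun u : 𝕂 => exp (u • D) v) (D (exp (s • D) v)) s :=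
      fun v => by simpa using (hasDerivAt_exp_smul_const' D s).clm_apply (hasDerivAt_const s v)
    have hB := (B.hasFDerivAt.comp_hasDerivAt s (hexp a)).clm_apply (hexp b)
    have hneg : HasDerivAt (fun u : 𝕂 => exp (-(u • D))) (-(exp (-(s • D)) * D)) s := by
      simpa [Function.comp_def, neg_smul] using
        (hasDerivAt_exp_smul_const D (-s)).scomp s (hasDerivAt_neg s)
    refine (hneg.clm_apply hB).congr_deriv ?_
    simp only [Function.comp_apply]
    rw [← hD]
    simp
  have hconst : f t = f 0 := is_const_of_deriv_eq_zero (fun s => (hf s).differentiableAt)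
    (fun s => (hf s).deriv) t 0
  simp only [f, zero_smul, neg_zero, exp_zero, one_apply_eq_self] at hconst
  rw [← hconst, exp_apply_exp_neg_apply]

theorem apply_mem_of_forall_exp_smul_apply_mem (D : V →L[𝕂] V) {S : Submodule 𝕂 V}
    (hS : IsClosed (S : Set V)) {v : V} (h : ∀ t : 𝕂, exp (t • D) v ∈ S) : D v ∈ S := by
  have hder : HasDerivAt (fun t : 𝕂 => exp (t • D) v) (D v) 0 := by
    simpa using (hasDerivAt_exp_smul_const' D 0).clm_apply (hasDerivAt_const (0 : 𝕂) v)
  refine hS.mem_of_tendsto (hasDerivAt_iff_tendsto_slope.1 hder) ?_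
  filter_upwards with t
  rw [slope_def_module]
  exact S.smul_mem _ (S.sub_mem (h t) (h 0))

end Exponential

section Automorphisms

variable {𝕂 L : Type*} [RCLike 𝕂] [LieRing L] [LieAlgebra 𝕂 L]

/-- `L` carries no norm, so the exponential of `D` is taken through the coordinates `ι`. -/
theorem LieDerivation.exists_lieEquiv_exp_smul {V : Type*} [NormedAddCommGroup V]
    [NormedSpace 𝕂 V] [FiniteDimensional 𝕂 V] (ι : L ≃ₗ[𝕂] V) (D : LieDerivation 𝕂 L L)
    (t : 𝕂) :
    ∃ e : L ≃ₗ⁅𝕂⁆ L, ∀ y, e y = ι.symm (NormedSpace.exp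
      (t • LinearMap.toContinuousLinearMap (ι.conj (D : Module.End 𝕂 L))) (ι y)) := by
  have := FiniteDimensional.complete 𝕂 V
  set D' := LinearMap.toContinuousLinearMap (ι.conj (D : Module.End 𝕂 L))
  obtain ⟨B, hB⟩ : ∃ B : V →L[𝕂] V →L[𝕂] V, ∀ a b, B a b = ι ⁅ι.symm a, ι.symm b⁆ :=
    ⟨LinearMap.toContinuousLinearMap (LinearMap.toContinuousLinearMap.toLinearMap ∘ₗ
      ι.conj.toLinearMap ∘ₗ (LieAlgebra.ad 𝕂 L : L →ₗ[𝕂] Module.End 𝕂 L) ∘ₗ ι.symm.toLinearMap),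
      fun a b => by simp [LinearEquiv.conj_apply]⟩
  have hD' : ∀ a b, D' (B a b) = B (D' a) b + B a (D' b) := by
    intro a b
    simp [D', hB, LinearEquiv.conj_apply, D.apply_lie_eq_add, add_comm]
  refine ⟨{ toLinearMap :=
              ι.symm.toLinearMap ∘ₗ (NormedSpace.exp (t • D')).toLinearMap ∘ₗ ι.toLinearMap
            map_lie' := ?_
            invFun := fun y => ι.symm (NormedSpace.exp (-(t • D')) (ι y))
            left_inv := ?_
            right_inv := ?_ }, fun y => rfl⟩
  · intro a b
    simpa [hB] using congrArg ι.symm (exp_smul_apply_of_leibniz B D' hD' t (ι a) (ι b))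
  · intro y
    simp [exp_neg_apply_exp_apply]
  · intro y
    simp [exp_apply_exp_neg_apply]

theorem LieAlgebra.lie_mem_of_forall_lieEquiv_apply_mem [FiniteDimensional 𝕂 L]
    {S : Submodule 𝕂 L} (hS : ∀ (e : L ≃ₗ⁅𝕂⁆ L) {y}, y ∈ S → e y ∈ S) (x : L) {y : L}
    (hy : y ∈ S) : ⁅x, y⁆ ∈ S := by
  let ι := (Module.finBasis 𝕂 L).equivFun
  let D := LinearMap.toContinuousLinearMap (ι.conj (LieDerivation.ad 𝕂 L x : Module.End 𝕂 L))
  have hexp : ∀ t : 𝕂, exp (t • D) (ι y) ∈ S.comap ι.symm.toLinearMap := fun t => by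
    obtain ⟨e, he⟩ := (LieDerivation.ad 𝕂 L x).exists_lieEquiv_exp_smul ι t
    have hey := hS e hy
    rw [he] at hey
    exact hey
  simpa [D, LinearEquiv.conj_apply] using
    apply_mem_of_forall_exp_smul_apply_mem D (Submodule.closed_of_finiteDimensional _) hexp

end Automorphisms

namespace LieSubalgebra

section CommRing

variable {R L L' : Type*} [CommRing R] [LieRing L] [LieAlgebra R L] [LieRing L'] [LieAlgebra R L']

def comapOrderIso (e : L ≃ₗ⁅R⁆ L') : LieSubalgebra R L' ≃o LieSubalgebra R L where
  toFun K := K.comap e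
  invFun K := K.comap e.symm
  left_inv K := by ext; simp
  right_inv K := by ext; simp
  map_rel_iff' {K K'} := by
    refine ⟨fun h y hy => ?_, fun h y hy => h hy⟩
    simpa using @h (e.symm y) (by simpa using hy)

variable (R L) in
def frattini : LieSubalgebra R L := Order.radical (LieSubalgebra R L)

theorem frattini_eq_sInf : frattini R L = sInf {M | IsCoatom M} := sInf_eq_iInf.symm

theorem frattini_le_of_isCoatom {M : LieSubalgebra R L} (hM : IsCoatom M) : frattini R L ≤ M :=
  Order.radical_le_coatom hM

theorem comap_frattini (e : L ≃ₗ⁅R⁆ L') : (frattini R L').comap e = frattini R L :=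
  (comapOrderIso e).map_radical

theorem apply_mem_frattini (e : L ≃ₗ⁅R⁆ L) {y : L} (hy : y ∈ frattini R L) :
    e y ∈ frattini R L := by
  rw [← comap_frattini e] at hy
  exact hy

theorem exists_lieIdeal_coe_eq_of_isCoatom_of_mem_center {M : LieSubalgebra R L}
    (hM : IsCoatom M) {z : L} (hz : z ∈ LieAlgebra.center R L) (hzM : z ∉ M) :
    ∃ I : LieIdeal R L, I = M := by
  have hz_norm : z ∈ M.normalizer := (M.mem_normalizer_iff' z).2 fun y _ => by
    rw [(LieModule.mem_maxTrivSubmodule R L L z).1 hz y]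
    exact M.zero_mem
  have hnorm : M.normalizer = ⊤ :=
    hM.2 _ (SetLike.lt_iff_le_and_exists.2 ⟨M.le_normalizer, z, hz_norm, hzM⟩)
  refine (exists_lieIdeal_coe_eq_iff R M).2 fun x y hy => ideal_in_normalizer ?_ hy
  rw [hnorm]
  exact mem_top x

end CommRing

theorem isCoatom_bot_iff_finrank_eq_one {K L : Type*} [Field K] [LieRing L] [LieAlgebra K L] :
    IsCoatom (⊥ : LieSubalgebra K L) ↔ Module.finrank K L = 1 := by
  constructor
  · intro h
    obtain ⟨z, -, hz⟩ := SetLike.exists_of_lt (lt_top_iff_ne_top.2 h.1)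
    have hz0 : z ≠ 0 := fun h0 => hz (h0 ▸ zero_mem _)
    have hspan : lieSpan K L {z} = ⊤ :=
      h.2 _ (SetLike.lt_iff_le_and_exists.2 ⟨bot_le, z, subset_lieSpan rfl, hz⟩)
    have : Submodule.span K {z} = ⊤ := by
      rw [← coe_lieSpan_eq_span_of_forall_lie_eq_zero (by simp), hspan, top_toSubmodule]
    rw [← finrank_top K L, ← this, finrank_span_singleton hz0]
  · intro h
    have : Nontrivial L := Module.nontrivial_of_finrank_eq_succ h
    refine ⟨fun hbot => ?_, fun N hN => ?_⟩
    · obtain ⟨z, hz⟩ := exists_ne (0 : L)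
      exact hz ((mem_bot z).1 (hbot ▸ mem_top z))
    · obtain ⟨w, hwN, hw⟩ := SetLike.exists_of_lt hN
      rw [mem_bot] at hw
      refine eq_top_iff.2 fun v _ => ?_
      obtain ⟨c, rfl⟩ := (finrank_eq_one_iff_of_nonzero' w hw).1 h v
      exact N.smul_mem c hwN

theorem frattini_eq_bot_of_isCoatom {𝕂 L : Type*} [RCLike 𝕂] [LieRing L] [LieAlgebra 𝕂 L]
    [FiniteDimensional 𝕂 L] {M : LieSubalgebra 𝕂 L} (hM : IsCoatom M)
    (hcore : ∀ I : LieIdeal 𝕂 L, (I : Submodule 𝕂 L) ≤ M.toSubmodule → I = ⊥) :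
    frattini 𝕂 L = ⊥ := by
  obtain ⟨I, hI⟩ := (exists_lieIdeal_coe_eq_iff 𝕂 (frattini 𝕂 L)).2 fun x y hy =>
    LieAlgebra.lie_mem_of_forall_lieEquiv_apply_mem (S := (frattini 𝕂 L).toSubmodule)
      (fun e _ hy => apply_mem_frattini e hy) x hy
  have hIbot : I = ⊥ := hcore I (by rw [hI]; exact frattini_le_of_isCoatom hM)
  rw [← hI, hIbot]
  ext; simp

end LieSubalgebra

theorem LieAlgebra.center_eq_bot_of_isCoatom {K L : Type*} [Field K] [LieRing L] [LieAlgebra K L]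
    {M : LieSubalgebra K L} (hM : IsCoatom M)
    (hcore : ∀ I : LieIdeal K L, (I : Submodule K L) ≤ M.toSubmodule → I = ⊥)
    (h2 : 2 ≤ Module.finrank K L) : center K L = ⊥ := by
  by_cases hZ : (center K L : Submodule K L) ≤ M.toSubmodule
  · exact hcore _ hZ
  obtain ⟨z, hz, hzM⟩ := SetLike.not_le_iff_exists.1 hZ
  obtain ⟨I, hI⟩ := LieSubalgebra.exists_lieIdeal_coe_eq_of_isCoatom_of_mem_center hM hz hzM
  have hMbot : M = ⊥ := by
    rw [← hI, hcore I (by rw [hI])]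
    ext; simp
  rw [hMbot, LieSubalgebra.isCoatom_bot_iff_finrank_eq_one] at hM
  omega

/-- A subsimple finite-dimensional complex Lie algebra is Frattini-free, and has trivial
centre when its dimension is at least 2. -/
theorem stmt_16 {L : Type*} [LieRing L] [LieAlgebra ℂ L] [FiniteDimensional ℂ L]
    (hss : Module.finrank ℂ L = 1 ∨
      ∃ M : LieSubalgebra ℂ L, M ≠ ⊤ ∧ (∀ N : LieSubalgebra ℂ L, M < N → N = ⊤) ∧
        ∀ I : LieIdeal ℂ L, (I : Submodule ℂ L) ≤ M.toSubmodule → I = ⊥) :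
    sInf {M : LieSubalgebra ℂ L | M ≠ ⊤ ∧ ∀ N : LieSubalgebra ℂ L, M < N → N = ⊤} = ⊥ ∧
    (2 ≤ Module.finrank ℂ L → LieAlgebra.center ℂ L = ⊥) := by
  obtain ⟨M, hM, hcore⟩ : ∃ M : LieSubalgebra ℂ L, IsCoatom M ∧
      ∀ I : LieIdeal ℂ L, (I : Submodule ℂ L) ≤ M.toSubmodule → I = ⊥ := by
    rcases hss with h1 | ⟨M, hMtop, hMmax, hcore⟩
    · refine ⟨⊥, LieSubalgebra.isCoatom_bot_iff_finrank_eq_one.2 h1, fun I hI => ?_⟩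
      rw [LieSubalgebra.bot_toSubmodule, le_bot_iff] at hI
      exact (LieSubmodule.toSubmodule_eq_bot I).1 hI
    · exact ⟨M, ⟨hMtop, hMmax⟩, hcore⟩
  exact ⟨LieSubalgebra.frattini_eq_sInf.symm.trans
      (LieSubalgebra.frattini_eq_bot_of_isCoatom hM hcore),
    LieAlgebra.center_eq_bot_of_isCoatom hM hcore⟩
end
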